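/- For positive integers n, ∑_{k=0}^{n} q^{(k-n)²} · C_q(n, k)² · C_q(3n+k, 2n) = C_q(3n, n)², where C_q denotes the Gaussian binomial coefficient. -/

import Mathlib

open Finset

/-- The q-Pochhammer symbol `(a;q)_n = ∏_{j=0}^{n-1} (1 - a q^j)`. -/
noncomputable def qPoch (q a : RatFunc ℚ) (n : ℕ) : RatFunc ℚ :=
  ∏ j ∈ Finset.range n, (1 - a * q ^ j)

/-- The Gaussian (q-binomial) coefficient `C_q(m, k)`, defined as
`(q;q)_m / ((q;q)_k (q;q)_{m-k})` for `0 ≤ k ≤ m`, and `0` otherwise. -/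
noncomputable def qBinom (q : RatFunc ℚ) (m k : ℤ) : RatFunc ℚ :=
  if 0 ≤ k ∧ k ≤ m then
    qPoch q q m.toNat / (qPoch q q k.toNat * qPoch q q (m - k).toNat)
  else 0

/-!
Read backwards (`k = n - j`), the sum is the case `x = y = n`, `d = 2n` of the
q-Pfaff–Saalschütz identity `∑_j q^(j²) C(x,j) C(y,j) C(x+y+d-j, x+y) = C(x+d,x) C(y+d,y)`.
Both sides satisfy the same first-order recurrence in `d`: on the right it is the q-Pascal rule,
on the left it follows by telescoping a q-Zeilberger certificate in `j`.
-/

theorem one_sub_pow_ne_zero {R : Type*} [Ring R] {x : R} (hx : ¬IsOfFinOrder x) {m : ℕ}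
    (hm : 0 < m) : 1 - x ^ m ≠ 0 :=
  sub_ne_zero.2 fun h => hx (isOfFinOrder_iff_pow_eq_one.2 ⟨m, hm, h.symm⟩)

theorem RatFunc.not_isOfFinOrder_X {K : Type*} [Field K] :
    ¬IsOfFinOrder (RatFunc.X : RatFunc K) := by
  rw [isOfFinOrder_iff_pow_eq_one]
  rintro ⟨n, hn, hXn⟩
  refine RatFunc.transcendental_X (K := K) ⟨_, Polynomial.X_pow_sub_C_ne_zero hn 1, ?_⟩
  simp [hXn]

theorem qPoch_zero (q a : RatFunc ℚ) : qPoch q a 0 = 1 := prod_range_zero _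

theorem qPoch_self_succ (q : RatFunc ℚ) (n : ℕ) :
    qPoch q q (n + 1) = qPoch q q n * (1 - q ^ (n + 1)) := by
  rw [qPoch, qPoch, prod_range_succ, ← pow_succ']

noncomputable def qChoose (q : RatFunc ℚ) (m k : ℕ) : RatFunc ℚ := qBinom q m k

theorem qBinom_natCast (q : RatFunc ℚ) (m k : ℕ) : qBinom q m k = qChoose q m k := rfl

variable {q : RatFunc ℚ}

theorem qPoch_self_ne_zero (hq : ¬IsOfFinOrder q) (n : ℕ) : qPoch q q n ≠ 0 :=
  prod_ne_zero_iff.2 fun j _ => by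
    rw [← pow_succ']
    exact one_sub_pow_ne_zero hq j.succ_pos

theorem qChoose_eq_div {m k : ℕ} (h : k ≤ m) :
    qChoose q m k = qPoch q q m / (qPoch q q k * qPoch q q (m - k)) := by
  rw [qChoose, qBinom, if_pos ⟨Int.natCast_nonneg k, Int.ofNat_le.2 h⟩, ← Nat.cast_sub h,
    Int.toNat_natCast, Int.toNat_natCast, Int.toNat_natCast]

theorem qChoose_eq_zero_of_lt {m k : ℕ} (h : m < k) : qChoose q m k = 0 := by
  rw [qChoose, qBinom, if_neg (by omega)]

theorem qChoose_self (hq : ¬IsOfFinOrder q) (m : ℕ) : qChoose q m m = 1 := by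
  rw [qChoose_eq_div le_rfl, Nat.sub_self, qPoch_zero, mul_one, div_self (qPoch_self_ne_zero hq m)]

theorem qChoose_zero_right (hq : ¬IsOfFinOrder q) (m : ℕ) : qChoose q m 0 = 1 := by
  rw [qChoose_eq_div m.zero_le, Nat.sub_zero, qPoch_zero, one_mul,
    div_self (qPoch_self_ne_zero hq m)]

theorem qChoose_symm {m k : ℕ} (h : k ≤ m) : qChoose q m (m - k) = qChoose q m k := by
  rw [qChoose_eq_div h, qChoose_eq_div (m.sub_le k), Nat.sub_sub_self h, mul_comm]

theorem qChoose_succ_left_mul (hq : ¬IsOfFinOrder q) (m k : ℕ) :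
    qChoose q (m + 1) k * (1 - q ^ (m + 1 - k)) = qChoose q m k * (1 - q ^ (m + 1)) := by
  rcases le_or_gt k m with h | h
  · rw [qChoose_eq_div (by omega), qChoose_eq_div h, Nat.sub_add_comm h, qPoch_self_succ q m,
      qPoch_self_succ q (m - k)]
    have := one_sub_pow_ne_zero hq (m - k).succ_pos
    field_simp [qPoch_self_ne_zero hq]
  · rw [qChoose_eq_zero_of_lt h, Nat.sub_eq_zero_of_le h, pow_zero, sub_self, mul_zero, zero_mul]

theorem qChoose_succ_right_mul (hq : ¬IsOfFinOrder q) (m k : ℕ) :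
    qChoose q m (k + 1) * (1 - q ^ (k + 1)) = qChoose q m k * (1 - q ^ (m - k)) := by
  rcases lt_or_ge k m with h | h
  · obtain ⟨i, rfl⟩ := Nat.exists_eq_add_of_lt h
    rw [qChoose_eq_div h, qChoose_eq_div h.le, show k + i + 1 - k = i + 1 by omega,
      show k + i + 1 - (k + 1) = i by omega, qPoch_self_succ q k, qPoch_self_succ q i]
    have := one_sub_pow_ne_zero hq k.succ_pos
    have := one_sub_pow_ne_zero hq i.succ_pos
    field_simp [qPoch_self_ne_zero hq]
  · rw [qChoose_eq_zero_of_lt (Nat.lt_succ_of_le h), Nat.sub_eq_zero_of_le h, pow_zero, sub_self,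
      mul_zero, zero_mul]

noncomputable def saalschutzTerm (q : RatFunc ℚ) (x y d j : ℕ) : RatFunc ℚ :=
  q ^ (j * j) * qChoose q x j * qChoose q y j * qChoose q (x + y + d - j) (x + y)

/-- The q-Zeilberger certificate of `saalschutzTerm` with respect to `d`. -/
noncomputable def saalschutzCert (q : RatFunc ℚ) (x y d j : ℕ) : RatFunc ℚ :=
  -(q ^ (d + 1 + j * (j - 1)) * (1 - q ^ j) ^ 2 * qChoose q x j * qChoose q y j *
    qChoose q (x + y + d + 1 - j) (x + y))

theorem saalschutzTerm_wz (hq : ¬IsOfFinOrder q) (x y d j : ℕ) :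
    (1 - q ^ (d + 1)) ^ 2 * saalschutzTerm q x y (d + 1) j
      - (1 - q ^ (x + d + 1)) * (1 - q ^ (y + d + 1)) * saalschutzTerm q x y d j
    = saalschutzCert q x y d (j + 1) - saalschutzCert q x y d j := by
  have hsq : j * j = j * (j - 1) + j := by cases j <;> simp; ring
  have hsucc : (j + 1) * (j + 1 - 1) = j * (j - 1) + 2 * j := by cases j <;> simp; ring
  simp only [saalschutzTerm, saalschutzCert, Nat.add_sub_add_right, hsq, hsucc,
    show x + y + (d + 1) - j = x + y + d + 1 - j from rfl]
  -- with `j * (j - 1)` opaque, `ring` sees `q ^ (j * j) = q ^ e * q ^ j`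
  generalize j * (j - 1) = e
  rcases lt_or_ge x j with hxj | hjx
  · simp [qChoose_eq_zero_of_lt hxj, qChoose_eq_zero_of_lt (hxj.trans j.lt_succ_self)]
  rcases lt_or_ge y j with hyj | hjy
  · simp [qChoose_eq_zero_of_lt hyj, qChoose_eq_zero_of_lt (hyj.trans j.lt_succ_self)]
  rcases lt_or_ge d j with hdj | hjd
  · rw [qChoose_eq_zero_of_lt (show x + y + d - j < x + y by omega)]
    obtain rfl | hdj := (show d + 1 ≤ j by omega).eq_or_lt
    · ring
    · rw [qChoose_eq_zero_of_lt (show x + y + d + 1 - j < x + y by omega)]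
      ring
  obtain ⟨a, rfl⟩ := Nat.exists_eq_add_of_le hjx
  obtain ⟨b, rfl⟩ := Nat.exists_eq_add_of_le hjy
  obtain ⟨c, rfl⟩ := Nat.exists_eq_add_of_le hjd
  have r1 := qChoose_succ_right_mul hq (j + a) j
  have r2 := qChoose_succ_right_mul hq (j + b) j
  have r3 := qChoose_succ_left_mul hq (2 * j + a + b + c) (2 * j + a + b)
  rw [Nat.add_sub_cancel_left] at r1 r2
  rw [show 2 * j + a + b + c + 1 - (2 * j + a + b) = c + 1 by omega] at r3
  rw [show j + a + (j + b) + (j + c) + 1 - j = 2 * j + a + b + c + 1 by omega,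
    show j + a + (j + b) + (j + c) - j = 2 * j + a + b + c by omega,
    show j + a + (j + b) = 2 * j + a + b by omega]
  have r12 := congr($r1 * $r2)
  linear_combination
    (q ^ e * q ^ j * qChoose q (j + a) j * qChoose q (j + b) j *
      (1 - q ^ (c + 1) * q ^ (2 * j))) * r3
    + (q ^ (c + 1) * q ^ e * q ^ (3 * j) * qChoose q (2 * j + a + b + c) (2 * j + a + b)) * r12

theorem sum_saalschutzTerm (hq : ¬IsOfFinOrder q) {x N : ℕ} (hxN : x < N) (y d : ℕ) :
    ∑ j ∈ range N, saalschutzTerm q x y d j = qChoose q (x + d) x * qChoose q (y + d) y := by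
  induction d with
  | zero =>
    rw [sum_eq_single_of_mem 0 (mem_range.2 (x.zero_le.trans_lt hxN))]
    · simp [saalschutzTerm, qChoose_zero_right hq, qChoose_self hq]
    · intro j _ hj
      rcases lt_or_ge x j with h | h
      · simp [saalschutzTerm, qChoose_eq_zero_of_lt h]
      · rw [saalschutzTerm, qChoose_eq_zero_of_lt (show x + y + 0 - j < x + y by omega), mul_zero]
  | succ d ih =>
    have hrec : (1 - q ^ (d + 1)) ^ 2 * ∑ j ∈ range N, saalschutzTerm q x y (d + 1) j =
        (1 - q ^ (x + d + 1)) * (1 - q ^ (y + d + 1)) *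
          ∑ j ∈ range N, saalschutzTerm q x y d j := by
      rw [← sub_eq_zero, mul_sum, mul_sum, ← sum_sub_distrib]
      simp only [saalschutzTerm_wz hq]
      rw [sum_range_sub]
      simp [saalschutzCert, qChoose_eq_zero_of_lt hxN]
    have hx := qChoose_succ_left_mul hq (x + d) x
    have hy := qChoose_succ_left_mul hq (y + d) y
    rw [show x + d + 1 - x = d + 1 by omega] at hx
    rw [show y + d + 1 - y = d + 1 by omega] at hy
    apply mul_left_cancel₀ (pow_ne_zero 2 (one_sub_pow_ne_zero hq (by omega : 0 < d + 1)))
    rw [hrec, ih]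
    linear_combination -congr($hx * $hy)

theorem q_gould_square_general (n : ℕ) :
    ∑ k ∈ Finset.range (n + 1),
      (RatFunc.X : RatFunc ℚ) ^ (((k : ℤ) - n) ^ 2) *
        qBinom RatFunc.X (n : ℤ) (k : ℤ) ^ 2 *
        qBinom RatFunc.X (3 * (n : ℤ) + k) (2 * (n : ℤ))
    = qBinom RatFunc.X (3 * (n : ℤ)) (n : ℤ) ^ 2 := by
  rw [← sum_range_reflect, Nat.add_sub_cancel]
  calc _ = ∑ j ∈ range (n + 1), saalschutzTerm RatFunc.X n n (2 * n) j :=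
        sum_congr rfl fun j hj => ?_
    _ = qChoose RatFunc.X (n + 2 * n) n * qChoose RatFunc.X (n + 2 * n) n :=
        sum_saalschutzTerm RatFunc.not_isOfFinOrder_X n.lt_succ_self n (2 * n)
    _ = _ := by rw [show 3 * (n : ℤ) = ((n + 2 * n : ℕ) : ℤ) by omega, qBinom_natCast, sq]
  have hjn : j ≤ n := Nat.lt_succ_iff.1 (mem_range.1 hj)
  rw [show (((n - j : ℕ) : ℤ) - n) ^ 2 = ((j * j : ℕ) : ℤ) by push_cast [hjn]; ring,
    show 3 * (n : ℤ) + ((n - j : ℕ) : ℤ) = ((n + n + 2 * n - j : ℕ) : ℤ) by omega,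
    show 2 * (n : ℤ) = ((n + n : ℕ) : ℤ) by omega, zpow_natCast, qBinom_natCast,
    qBinom_natCast, qChoose_symm hjn, saalschutzTerm]
  ring

theorem q_gould_square (n : ℕ) (hn : 0 < n) :
    ∑ k ∈ Finset.range (n + 1),
      (RatFunc.X : RatFunc ℚ) ^ (((k : ℤ) - n) ^ 2) *
        qBinom RatFunc.X (n : ℤ) (k : ℤ) ^ 2 *
        qBinom RatFunc.X (3 * (n : ℤ) + k) (2 * (n : ℤ))
    = qBinom RatFunc.X (3 * (n : ℤ)) (n : ℤ) ^ 2 :=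
  q_gould_square_general n
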